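/- arXiv:2602.05727 — 2 statements merged into one kernel-verified Lean document; each statement's English description precedes it below -/
import Mathlib

section
/- Consider the ODE system v' = -PC⁻¹D_xPv where H̄ = H₂C is symmetric positive definite, H̄P = PᵀH̄, and H₂D_x + (H₂D_x)ᵀ = B̄. Then any solution satisfies d/dt (vᵀH̄v) = -(Pv)ᵀ B̄ (Pv). -/
/-!
Write `A = P C⁻¹ D_x P`, so that `v' = -A v` and `d/dt (vᵀ H̄ v) = -vᵀ (Aᵀ H̄ + H̄ A) v`.
Since `H̄ C⁻¹ = H₂` and `H̄ P = Pᵀ H̄`, we get `H̄ A = Pᵀ (H₂ D_x) P`, and by symmetry of `H̄`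
also `Aᵀ H̄ = Pᵀ (H₂ D_x)ᵀ P`; hence `Aᵀ H̄ + H̄ A = Pᵀ B̄ P`. Invertibility of `C` comes from
`det H̄ > 0`.
-/

open Matrix

section Calculus

variable {𝕜 ι : Type*} [NontriviallyNormedField 𝕜] [Fintype ι] {u v : 𝕜 → ι → 𝕜}
  {u' v' : ι → 𝕜} {t : 𝕜}

theorem HasDerivAt.dotProduct (hu : HasDerivAt u u' t) (hv : HasDerivAt v v' t) :
    HasDerivAt (fun s => u s ⬝ᵥ v s) (u' ⬝ᵥ v t + u t ⬝ᵥ v') t := by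
  have h := HasDerivAt.fun_sum (u := Finset.univ) fun i _ =>
    (hasDerivAt_pi.1 hu i).fun_mul (hasDerivAt_pi.1 hv i)
  rwa [Finset.sum_add_distrib] at h

theorem HasDerivAt.mulVec (M : Matrix ι ι 𝕜) (hv : HasDerivAt v v' t) :
    HasDerivAt (fun s => M *ᵥ v s) (M *ᵥ v') t :=
  hasDerivAt_pi.2 fun i => by
    simpa [Matrix.mulVec] using (hasDerivAt_const t fun j => M i j).dotProduct hv

end Calculus

section Algebra

variable {ι R : Type*} [Fintype ι] [CommRing R]

theorem dotProduct_mulVec_add_dotProduct_mulVec (A H : Matrix ι ι R) (w : ι → R) :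
    A *ᵥ w ⬝ᵥ H *ᵥ w + w ⬝ᵥ H *ᵥ (A *ᵥ w) = w ⬝ᵥ (Aᵀ * H + H * A) *ᵥ w := by
  rw [add_mulVec, dotProduct_add, ← mulVec_mulVec, ← mulVec_mulVec,
    dotProduct_mulVec w Aᵀ, vecMul_transpose]

theorem dotProduct_mulVec_transpose_mul_mul (P B : Matrix ι ι R) (w : ι → R) :
    w ⬝ᵥ (Pᵀ * B * P) *ᵥ w = P *ᵥ w ⬝ᵥ B *ᵥ (P *ᵥ w) := by
  rw [← mulVec_mulVec, ← mulVec_mulVec, dotProduct_mulVec, vecMul_transpose]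

theorem transpose_mul_add_mul_eq_of_projection_compatible [DecidableEq ι]
    {C H₂ D P H : Matrix ι ι R} (hH : H = H₂ * C) (hC : IsUnit C.det) (hHs : H.IsSymm)
    (hHP : H * P = Pᵀ * H) :
    (P * C⁻¹ * D * P)ᵀ * H + H * (P * C⁻¹ * D * P) = Pᵀ * (H₂ * D + (H₂ * D)ᵀ) * P := by
  have hHA : H * (P * C⁻¹ * D * P) = Pᵀ * (H₂ * D) * P := by
    calc H * (P * C⁻¹ * D * P) = (H * P) * C⁻¹ * D * P := by simp only [Matrix.mul_assoc]
      _ = Pᵀ * H₂ * (C * C⁻¹) * D * P := by rw [hHP, hH]; simp only [Matrix.mul_assoc]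
      _ = Pᵀ * (H₂ * D) * P := by
          rw [mul_nonsing_inv C hC]; simp only [Matrix.mul_one, Matrix.mul_assoc]
  have hAH : (P * C⁻¹ * D * P)ᵀ * H = Pᵀ * (H₂ * D)ᵀ * P := by
    calc (P * C⁻¹ * D * P)ᵀ * H = (H * (P * C⁻¹ * D * P))ᵀ := by
          rw [Matrix.transpose_mul H, hHs.eq]
      _ = Pᵀ * (H₂ * D)ᵀ * P := by
          rw [hHA, transpose_mul, transpose_mul, transpose_transpose, Matrix.mul_assoc]
  rw [hAH, hHA, Matrix.mul_add, Matrix.add_mul]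
  abel

end Algebra

theorem stmt_8_general {n : ℕ} (C H2 Dx P Hbar Bbar : Matrix (Fin n) (Fin n) ℝ)
    (hHbar : Hbar = H2 * C)
    (hHpd : Hbar.PosDef) (hHs : Hbar.IsSymm)
    (hHP : Hbar * P = Pᵀ * Hbar)
    (hBbar : Bbar = H2 * Dx + (H2 * Dx)ᵀ)
    (v : ℝ → Fin n → ℝ)
    (hv : ∀ t : ℝ, HasDerivAt v (-(P * C⁻¹ * Dx * P).mulVec (v t)) t) :
    ∀ t : ℝ, HasDerivAt (fun t => v t ⬝ᵥ Hbar.mulVec (v t))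
      (-(P.mulVec (v t) ⬝ᵥ Bbar.mulVec (P.mulVec (v t)))) t := by
  intro t
  have hC : IsUnit C.det := by
    have hdet := hHpd.det_pos.ne'
    rw [hHbar, det_mul] at hdet
    exact isUnit_iff_ne_zero.2 (right_ne_zero_of_mul hdet)
  refine ((hv t).dotProduct ((hv t).mulVec Hbar)).congr_deriv ?_
  rw [hBbar, ← dotProduct_mulVec_transpose_mul_mul,
    ← transpose_mul_add_mul_eq_of_projection_compatible hHbar hC hHs hHP,
    ← dotProduct_mulVec_add_dotProduct_mulVec, neg_dotProduct, mulVec_neg,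
    dotProduct_neg, neg_add]

theorem stmt_8 {n : ℕ} (C H2 Dx P Hbar Bbar : Matrix (Fin n) (Fin n) ℝ)
    (hHbar : Hbar = H2 * C)
    (hHpd : Hbar.PosDef) (hHs : Hbar.IsSymm)
    (hHP : Hbar * P = Pᵀ * Hbar) (hPP : P * P = P)
    (hBbar : Bbar = H2 * Dx + (H2 * Dx)ᵀ)
    (v : ℝ → Fin n → ℝ)
    (hv : ∀ t : ℝ, HasDerivAt v (-(P * C⁻¹ * Dx * P).mulVec (v t)) t) :
    ∀ t : ℝ, HasDerivAt (fun t => v t ⬝ᵥ Hbar.mulVec (v t))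
      (-(P.mulVec (v t) ⬝ᵥ Bbar.mulVec (P.mulVec (v t)))) t :=
  stmt_8_general C H2 Dx P Hbar Bbar hHbar hHpd hHs hHP hBbar v hv
end

section
/- The 2m×2m matrix H₂D_x with D_x = [[αD₋, D₊],[D₋, 0]] and H₂ = I₂ ⊗ H satisfies H₂D_x + (H₂D_x)ᵀ = [[-2αS + αB, B],[B, 0]], where S = (Q₊+Q₊ᵀ)/2, provided D± = H⁻¹(Q± + B/2), Q₊ + Q₋ᵀ = 0, H symmetric, and B symmetric. -/
/-!
The blocks of `H₂ D_x` are `α H D₋`, `H D₊`, `H D₋`, `0`, and `H D± = Q± + B/2`. Adding the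
transpose, the off-diagonal blocks become `Q₊ + Q₋ᵀ + B = B`, and the top-left block becomes
`α (Q₋ + Q₋ᵀ + B) = α (B - 2S)` because `Q₋ = -Q₊ᵀ`.
-/

open Matrix

namespace Matrix

variable {n o R : Type*}

theorem fromBlocks_add_transpose [Add R] (A : Matrix n n R) (B : Matrix n o R)
    (C : Matrix o n R) (D : Matrix o o R) :
    fromBlocks A B C D + (fromBlocks A B C D)ᵀ =
      fromBlocks (A + Aᵀ) (B + Cᵀ) (C + Bᵀ) (D + Dᵀ) := by
  rw [fromBlocks_transpose, fromBlocks_add]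

theorem fromBlocks_diag_mul_fromBlocks [Fintype n] [Fintype o] [NonUnitalNonAssocSemiring R]
    (A : Matrix n n R) (D : Matrix o o R) (W : Matrix n n R) (X : Matrix n o R)
    (Y : Matrix o n R) (Z : Matrix o o R) :
    fromBlocks A 0 0 D * fromBlocks W X Y Z = fromBlocks (A * W) (A * X) (D * Y) (D * Z) := by
  simp only [fromBlocks_multiply, Matrix.zero_mul, add_zero, zero_add]

theorem add_half_smul_add_transpose_add_half_smul [DivisionRing R] [NeZero (2 : R)]
    {X Y B : Matrix n n R} (hB : B.IsSymm) :
    X + (1 / 2 : R) • B + (Y + (1 / 2 : R) • B)ᵀ = X + Yᵀ + B := by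
  rw [transpose_add, transpose_smul, hB.eq, add_add_add_comm, ← add_smul,
    add_halves, one_smul]

end Matrix

theorem stmt_15_general {m : ℕ} (H Qp Qm B : Matrix (Fin m) (Fin m) ℝ)
    (hH : IsUnit H) (hBs : B.IsSymm)
    (hQ : Qp + Qmᵀ = 0) (α : ℝ)
    (Dp Dm S : Matrix (Fin m) (Fin m) ℝ)
    (hDp : Dp = H⁻¹ * (Qp + (1 / 2 : ℝ) • B))
    (hDm : Dm = H⁻¹ * (Qm + (1 / 2 : ℝ) • B))
    (hS : S = (1 / 2 : ℝ) • (Qp + Qpᵀ))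
    (H2 Dx : Matrix (Fin m ⊕ Fin m) (Fin m ⊕ Fin m) ℝ)
    (hH2 : H2 = Matrix.fromBlocks H 0 0 H)
    (hDx : Dx = Matrix.fromBlocks (α • Dm) Dp Dm 0) :
    H2 * Dx + (H2 * Dx)ᵀ = Matrix.fromBlocks ((-(2 * α)) • S + α • B) B B 0 := by
  have hdet : IsUnit H.det := H.isUnit_iff_isUnit_det.mp hH
  have hHDp : H * Dp = Qp + (1 / 2 : ℝ) • B := by rw [hDp, mul_nonsing_inv_cancel_left _ _ hdet]
  have hHDm : H * Dm = Qm + (1 / 2 : ℝ) • B := by rw [hDm, mul_nonsing_inv_cancel_left _ _ hdet]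
  have hQm : Qm = -Qpᵀ := by
    rw [← transpose_transpose Qm, eq_neg_of_add_eq_zero_right hQ, transpose_neg]
  have hQ' : Qm + Qpᵀ = 0 := by rw [hQm, neg_add_cancel]
  subst hH2 hDx hS
  simp only [fromBlocks_diag_mul_fromBlocks, Matrix.mul_smul, hHDp, hHDm, Matrix.mul_zero,
    fromBlocks_add_transpose, transpose_smul, ← smul_add,
    add_half_smul_add_transpose_add_half_smul hBs, hQ, hQ', zero_add, transpose_zero, add_zero]
  rw [hQm, transpose_neg, transpose_transpose]
  congr 1
  module

theorem stmt_15 {m : ℕ} (H Qp Qm B : Matrix (Fin m) (Fin m) ℝ)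
    (hH : IsUnit H) (hHs : H.IsSymm) (hBs : B.IsSymm)
    (hQ : Qp + Qmᵀ = 0) (α : ℝ)
    (Dp Dm S : Matrix (Fin m) (Fin m) ℝ)
    (hDp : Dp = H⁻¹ * (Qp + (1 / 2 : ℝ) • B))
    (hDm : Dm = H⁻¹ * (Qm + (1 / 2 : ℝ) • B))
    (hS : S = (1 / 2 : ℝ) • (Qp + Qpᵀ))
    (H2 Dx : Matrix (Fin m ⊕ Fin m) (Fin m ⊕ Fin m) ℝ)
    (hH2 : H2 = Matrix.fromBlocks H 0 0 H)
    (hDx : Dx = Matrix.fromBlocks (α • Dm) Dp Dm 0) :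
    H2 * Dx + (H2 * Dx)ᵀ = Matrix.fromBlocks ((-(2 * α)) • S + α • B) B B 0 :=
  stmt_15_general H Qp Qm B hH hBs hQ α Dp Dm S hDp hDm hS H2 Dx hH2 hDx
end
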